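/- Let V be a C_2-cofinite vertex operator algebra of CFT-type. Then for every n ∈ ℕ, the n-th Zhu algebra A_n(V) = V/O_n(V) is finite-dimensional. -/
import Mathlib


open scoped BigOperators

namespace VOAPaper

/-- Integer binomial coefficient `C(m, i)` for `m : ℤ`, `i : ℕ`. -/
def zchoose (m : ℤ) (i : ℕ) : ℤ :=
  if 0 ≤ m then ((m.toNat).choose i : ℤ)
  else (-1) ^ i * ((((i : ℤ) - m - 1).toNat).choose i : ℤ)

variable (V : Type) [AddCommGroup V] [Module ℂ V]

/-- A vertex algebra structure on `V`: modes `u_n`, vacuum, truncation,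
vacuum/creation axioms, and the Borcherds (Jacobi) identity. -/
structure VertexAlg where
  mode : V →ₗ[ℂ] ℤ → Module.End ℂ V
  vac : V
  trunc : ∀ u w : V, ∃ N : ℤ, ∀ n : ℤ, N ≤ n → mode u n w = 0
  vac_mode : ∀ (n : ℤ) (w : V), mode vac n w = if n = -1 then w else 0
  creation_neg_one : ∀ u : V, mode u (-1) vac = u
  creation_nonneg : ∀ (u : V) (n : ℤ), 0 ≤ n → mode u n vac = 0
  borcherds : ∀ (u v w : V) (p q m : ℤ),
    (∑ᶠ i : ℕ, zchoose m i • mode (mode u (p + i) v) (m + q - i) w) =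
    (∑ᶠ i : ℕ, ((-1 : ℤ) ^ i * zchoose p i) •
      (mode u (p + m - i) (mode v (q + i) w)
        - (p.negOnePow : ℤ) • mode v (p + q - i) (mode u (m + i) w)))

/-- A vertex operator algebra of CFT-type: a vertex algebra with conformal
vector `ω`, central charge `c`, an `L(0)`-grading `V = ⊕_{n ≥ 0} V_n` with
`V_0 = ℂ 1`, Virasoro relations, and the `L(-1)`-derivation property. -/
structure VOA extends VertexAlg V where
  ω : V
  c : ℂ
  grading : ℤ → Submodule ℂ V
  internal : DirectSum.IsInternal grading
  neg_bot : ∀ n : ℤ, n < 0 → grading n = ⊥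
  L0_eigen : ∀ (n : ℤ) (v : V), v ∈ grading n → mode ω 1 v = (n : ℂ) • v
  vac_grade : vac ∈ grading 0
  cft : grading 0 = Submodule.span ℂ {vac}
  ω_grade : ω ∈ grading 2
  virasoro : ∀ m n : ℤ,
    mode ω (m + 1) * mode ω (n + 1) - mode ω (n + 1) * mode ω (m + 1)
      = (m - n) • mode ω (m + n + 1)
        + (if m + n = 0 then ((m ^ 3 - m : ℂ) / 12) * c else 0) • (1 : Module.End ℂ V)
  Lneg1_deriv : ∀ (u : V) (n : ℤ), mode (mode ω 0 u) n = (-n) • mode u (n - 1)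

/-- A weak module for (the underlying vertex algebra of) `V`. -/
structure WeakMod (A : VertexAlg V) (M : Type) [AddCommGroup M] [Module ℂ M] where
  mmode : V →ₗ[ℂ] ℤ → Module.End ℂ M
  trunc : ∀ (v : V) (w : M), ∃ N : ℤ, ∀ n : ℤ, N ≤ n → mmode v n w = 0
  vac_mode : ∀ (n : ℤ) (w : M), mmode A.vac n w = if n = -1 then w else 0
  borcherds : ∀ (u v : V) (w : M) (p q m : ℤ),
    (∑ᶠ i : ℕ, zchoose m i • mmode (A.mode u (p + i) v) (m + q - i) w) =
    (∑ᶠ i : ℕ, ((-1 : ℤ) ^ i * zchoose p i) •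
      (mmode u (p + m - i) (mmode v (q + i) w)
        - (p.negOnePow : ℤ) • mmode v (p + q - i) (mmode u (m + i) w)))

/-- An ℕ-gradable weak module: a weak module with a compatible
lower-truncated grading `M = ⊕_{n ≥ 0} M(n)`. -/
structure NGradedMod (W : VOA V) (M : Type) [AddCommGroup M] [Module ℂ M]
    extends WeakMod V W.toVertexAlg M where
  mgrading : ℤ → Submodule ℂ M
  internal : DirectSum.IsInternal mgrading
  neg_bot : ∀ n : ℤ, n < 0 → mgrading n = ⊥
  compat : ∀ (r : ℤ) (v : V), v ∈ W.grading r → ∀ (m n : ℤ), ∀ w ∈ mgrading n,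
    mmode v m w ∈ mgrading (n + r - m - 1)

/-- Iterated application of modes: `applyModes [(u¹,n₁),…,(uʳ,nᵣ)] w = u¹_{n₁} ⋯ uʳ_{nᵣ} w`. -/
def applyModes (A : VertexAlg V) : List (V × ℤ) → V → V
  | [], w => w
  | p :: L, w => A.mode p.1 p.2 (applyModes A L w)

/-- Iterated application of module modes. -/
def applyModesM {M : Type} [AddCommGroup M] [Module ℂ M] {A : VertexAlg V}
    (Mod : WeakMod V A M) : List (V × ℤ) → M → M
  | [], w => w
  | p :: L, w => Mod.mmode p.1 p.2 (applyModesM Mod L w)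

/-- The subspace `C_n(V) = span{ u_{-n} v }`. -/
def Cspace (A : VertexAlg V) (n : ℕ) : Submodule ℂ V :=
  Submodule.span ℂ { x | ∃ u v : V, x = A.mode u (-(n : ℤ)) v }

/-- The subspace `C_1(V) = span{ u_{-1} v, L(-1)u : u, v ∈ V_+ }`. -/
def C1space (W : VOA V) : Submodule ℂ V :=
  Submodule.span ℂ
    ({ x | ∃ u v : V, (∃ r : ℤ, 0 < r ∧ u ∈ W.grading r) ∧
        (∃ r : ℤ, 0 < r ∧ v ∈ W.grading r) ∧ x = W.mode u (-1) v }
      ∪ { x | ∃ u : V, (∃ r : ℤ, 0 < r ∧ u ∈ W.grading r) ∧ x = W.mode W.ω 0 u })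

/-- A submodule invariant under all modes. -/
def Invariant {M : Type} [AddCommGroup M] [Module ℂ M] {A : VertexAlg V}
    (Mod : WeakMod V A M) (N : Submodule ℂ M) : Prop :=
  ∀ (v : V) (n : ℤ), ∀ w ∈ N, Mod.mmode v n w ∈ N

/-- Irreducibility of a weak module. -/
def IsIrreducibleMod {M : Type} [AddCommGroup M] [Module ℂ M] {A : VertexAlg V}
    (Mod : WeakMod V A M) : Prop :=
  (⊤ : Submodule ℂ M) ≠ ⊥ ∧
    ∀ N : Submodule ℂ M, Invariant V Mod N → N = ⊥ ∨ N = ⊤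

/-- `O_n(V) = span{ Res_x (1+x)^{wt u + n} x^{-2n-2} Y(u,x)v }
= span{ Σ_i C(wt u + n, i) u_{i-2n-2} v }`. -/
def Onspace (W : VOA V) (n : ℕ) : Submodule ℂ V :=
  Submodule.span ℂ { x | ∃ (r : ℤ) (u v : V), u ∈ W.grading r ∧
    x = ∑ᶠ i : ℕ, zchoose (r + n) i • W.mode u ((i : ℤ) - (2 * n + 2)) v }



section Helpers
variable {M : Type*} [AddCommGroup M] [Module ℂ M]

/-- If all terms of a finsum lie in a submodule, so does the finsum. -/
lemma finsum_mem_submodule (S : Submodule ℂ M) (f : ℕ → M) (h : ∀ i, f i ∈ S) :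
    (∑ᶠ i, f i) ∈ S := by
  by_cases hf : (Function.support f).Finite
  · rw [finsum_eq_sum f hf]
    exact Submodule.sum_mem _ fun i _ => h i
  · rw [finsum_of_infinite_support hf]
    exact S.zero_mem

omit [Module ℂ M] in
lemma finsum_eq_sum_range (f : ℕ → M) (N : ℕ) (h : ∀ i, N ≤ i → f i = 0) :
    (∑ᶠ i, f i) = ∑ i ∈ Finset.range N, f i := by
  apply finsum_eq_finset_sum_of_support_subset
  intro i hi
  simp only [Finset.coe_range, Set.mem_Iio]
  by_contra hiN
  exact hi (h i (le_of_not_gt hiN))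

/-- Extraction: if a finsum (with bounded support) lies in `S` and all terms except
possibly the `a`-th lie in `S`, then the `a`-th term lies in `S`. -/
lemma extract_mem (S : Submodule ℂ M) (f : ℕ → M) (N a : ℕ)
    (h0 : ∀ i, N ≤ i → f i = 0) (hmem : ∀ i, i ≠ a → f i ∈ S)
    (hsum : (∑ᶠ i, f i) ∈ S) : f a ∈ S := by
  rcases lt_or_ge a N with haN | haN
  · have hs : (∑ᶠ i, f i) = f a + ∑ i ∈ (Finset.range N).erase a, f i := by
      rw [finsum_eq_sum_range f N h0, ← Finset.add_sum_erase _ f (Finset.mem_range.2 haN)]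
    have h2 : (∑ i ∈ (Finset.range N).erase a, f i) ∈ S :=
      Submodule.sum_mem _ fun i hi => hmem i (Finset.ne_of_mem_erase hi)
    have : f a = (∑ᶠ i, f i) - ∑ i ∈ (Finset.range N).erase a, f i := by
      rw [hs]; abel
    rw [this]; exact Submodule.sub_mem _ hsum h2
  · rw [h0 a haN]; exact S.zero_mem

end Helpers

section Formulas

variable {V : Type} [AddCommGroup V] [Module ℂ V]

lemma zchoose_zero_right (m : ℤ) : zchoose m 0 = 1 := by
  unfold zchoose; split <;> simp

lemma zchoose_zero_left (i : ℕ) (hi : i ≠ 0) : zchoose 0 i = 0 := by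
  unfold zchoose
  simp [Nat.choose_eq_zero_of_lt (Nat.pos_of_ne_zero hi)]

lemma zchoose_neg_one (i : ℕ) : zchoose (-1) i = (-1) ^ i := by
  unfold zchoose
  rw [if_neg (by omega)]
  have : ((i : ℤ) - (-1) - 1).toNat = i := by omega
  rw [this, Nat.choose_self]
  ring

lemma zchoose_one (i : ℕ) (hi : 2 ≤ i) : zchoose 1 i = 0 := by
  unfold zchoose
  rw [if_pos (by omega)]
  have h1 : (1:ℤ).toNat = 1 := rfl
  rw [h1, Nat.choose_eq_zero_of_lt (by omega)]
  simp

variable (A : VertexAlg V)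

/-- The commutator formula. -/
lemma comm_formula (u v w : V) (m q : ℤ) :
    A.mode u m (A.mode v q w) = A.mode v q (A.mode u m w)
      + ∑ᶠ i : ℕ, zchoose m i • A.mode (A.mode u i v) (m + q - i) w := by
  have hb := A.borcherds u v w 0 q m
  simp only [zero_add] at hb
  have hr : (∑ᶠ i : ℕ, ((-1 : ℤ) ^ i * zchoose 0 i) •
      (A.mode u (m - i) (A.mode v (q + i) w)
        - ((0:ℤ).negOnePow : ℤ) • A.mode v (q - i) (A.mode u (m + i) w)))
      = A.mode u m (A.mode v q w) - A.mode v q (A.mode u m w) := by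
    rw [finsum_eq_single _ 0 (fun i hi => by rw [zchoose_zero_left i hi]; ring_nf; simp)]
    simp [zchoose_zero_right, Int.negOnePow_zero]
  rw [hr] at hb
  have := hb.symm
  rw [sub_eq_iff_eq_add] at this
  rw [this]; abel

/-- The iterate (associativity) formula. -/
lemma iterate_formula (u v w : V) (p q : ℤ) :
    A.mode (A.mode u p v) q w = ∑ᶠ i : ℕ, ((-1:ℤ)^i * zchoose p i) •
      (A.mode u (p - i) (A.mode v (q + i) w)
        - (p.negOnePow : ℤ) • A.mode v (p + q - i) (A.mode u i w)) := by
  have hb := A.borcherds u v w p q 0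
  simp only [add_zero, zero_add] at hb
  have hl : (∑ᶠ i : ℕ, zchoose 0 i • A.mode (A.mode u (p + i) v) (q - i) w)
      = A.mode (A.mode u p v) q w := by
    rw [finsum_eq_single _ 0 (fun i hi => by rw [zchoose_zero_left i hi]; simp)]
    simp [zchoose_zero_right]
  rw [hl] at hb
  exact hb

end Formulas

section Cspaces

variable {V : Type} [AddCommGroup V] [Module ℂ V] (W : VOA V)

lemma mem_Cspace (k : ℕ) (u v : V) : W.mode u (-(k:ℤ)) v ∈ Cspace V W.toVertexAlg k :=
  Submodule.subset_span ⟨u, v, rfl⟩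

lemma Cspace_succ_le (j : ℕ) (hj : 1 ≤ j) :
    Cspace V W.toVertexAlg (j+1) ≤ Cspace V W.toVertexAlg j := by
  rw [Cspace, Submodule.span_le]
  rintro x ⟨u, v, rfl⟩
  have h2 := LinearMap.congr_fun (W.Lneg1_deriv u (-(j:ℤ))) v
  simp only [neg_neg, LinearMap.smul_apply] at h2
  have hj' : ((j:ℂ)) ≠ 0 := Nat.cast_ne_zero.2 (by omega)
  have h3 : W.mode u (-(j:ℤ)-1) v = ((j:ℂ))⁻¹ • W.mode (W.mode W.ω 0 u) (-(j:ℤ)) v := by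
    rw [h2]
    have : ((j:ℤ)) • W.mode u (-(j:ℤ)-1) v = ((j:ℂ)) • W.mode u (-(j:ℤ)-1) v := by
      rw [← Int.cast_smul_eq_zsmul ℂ]; norm_num
    rw [this, smul_smul, inv_mul_cancel₀ hj', one_smul]
  have hidx : (-(((j+1):ℕ):ℤ)) = (-(j:ℤ)-1) := by push_cast; ring
  rw [hidx, h3]
  exact Submodule.smul_mem _ _ (mem_Cspace W j _ _)

lemma Cspace_le {k j : ℕ} (hk : 1 ≤ k) (h : k ≤ j) :
    Cspace V W.toVertexAlg j ≤ Cspace V W.toVertexAlg k := by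
  induction j, h using Nat.le_induction with
  | base => exact le_refl _
  | succ j hj ih => exact le_trans (Cspace_succ_le W j (by omega)) ih

lemma mem_Cspace_of_le {k : ℕ} (hk : 1 ≤ k) {t : ℤ} (ht : t ≤ -(k:ℤ)) (x y : V) :
    W.mode x t y ∈ Cspace V W.toVertexAlg k := by
  have h1 : t = -((((-t).toNat : ℕ)) : ℤ) := by omega
  rw [h1]
  exact Cspace_le W hk (by omega) (mem_Cspace W _ x y)

lemma neg_mode_Cspace {k : ℕ} (hk : 1 ≤ k) (u a b : V) {m t : ℤ} (hm : m ≤ -1)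
    (ht : t ≤ -(k:ℤ)) : W.mode u m (W.mode a t b) ∈ Cspace V W.toVertexAlg k := by
  rw [comm_formula W.toVertexAlg u a b m t]
  apply Submodule.add_mem
  · exact mem_Cspace_of_le W hk ht a _
  · exact finsum_mem_submodule _ _ fun i =>
      zsmul_mem (mem_Cspace_of_le W hk (by omega) _ _) _

/-- The key lemma: `u_{-k} v_{-k} w ∈ C_{k+1}` for `k ≥ 2`. -/
lemma key_lemma {k : ℕ} (hk : 2 ≤ k) (u v w : V) :
    W.mode u (-(k:ℤ)) (W.mode v (-(k:ℤ)) w) ∈ Cspace V W.toVertexAlg (k+1) := by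
  set S := Cspace V W.toVertexAlg (k+1) with hS
  have hit := iterate_formula W.toVertexAlg u v w (-1) (-(2*(k:ℤ)) + 1)
  set f : ℕ → V := fun i => ((-1:ℤ)^i * zchoose (-1) i) •
      (W.mode u (-1 - (i:ℤ)) (W.mode v ((-(2*(k:ℤ)) + 1) + i) w)
        - ((-1:ℤ).negOnePow : ℤ) •
          W.mode v ((-1 + (-(2*(k:ℤ)) + 1)) - i) (W.mode u i w)) with hf
  obtain ⟨N₁, hN₁⟩ := W.trunc v w
  obtain ⟨N₂, hN₂⟩ := W.trunc u w
  set N : ℕ := (max (N₁ + 2*(k:ℤ)) N₂).toNat with hN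
  have h0 : ∀ i : ℕ, N ≤ i → f i = 0 := by
    intro i hi
    have hiZ : (N:ℤ) ≤ (i:ℤ) := by exact_mod_cast hi
    have hmax : max (N₁ + 2*(k:ℤ)) N₂ ≤ (i:ℤ) := le_trans (Int.self_le_toNat _) hiZ
    have hv : W.mode v ((-(2*(k:ℤ)) + 1) + i) w = 0 :=
      hN₁ _ (by have := le_trans (le_max_left _ N₂) hmax; omega)
    have hu : W.mode u i w = 0 :=
      hN₂ _ (by have := le_trans (le_max_right (N₁ + 2*(k:ℤ)) _) hmax; omega)
    rw [hf]; simp only [hv, hu, map_zero, smul_zero, sub_zero]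
  have hmem : ∀ i : ℕ, i ≠ k - 1 → f i ∈ S := by
    intro i hi
    apply zsmul_mem
    apply Submodule.sub_mem
    · rcases lt_or_ge i (k-1) with hik | hik
      · exact neg_mode_Cspace W (by omega) u v w (by omega) (by push_cast; omega)
      · have hik' : k ≤ i := by omega
        exact mem_Cspace_of_le W (by omega) (by push_cast; omega) u _
    · exact zsmul_mem (mem_Cspace_of_le W (by omega) (by push_cast; omega) v _) _
  have hsum : (∑ᶠ i, f i) ∈ S := by
    rw [← hit]
    exact mem_Cspace_of_le W (by omega) (by push_cast; omega) _ w
  have hfk : f (k-1) ∈ S := extract_mem S f N (k-1) h0 hmem hsum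
  -- now unpack f (k-1)
  have hcast : ((k - 1 : ℕ) : ℤ) = (k:ℤ) - 1 := by
    have : 1 ≤ k := by omega
    push_cast [this]; ring
  have hcoef : ((-1:ℤ)^(k-1) * zchoose (-1) (k-1)) = 1 := by
    rw [zchoose_neg_one, ← pow_add]
    have : Even ((k-1) + (k-1)) := ⟨k-1, rfl⟩
    exact this.neg_one_pow
  have hneg : ((-1:ℤ).negOnePow : ℤ) = -1 := by
    rw [Int.negOnePow_odd (-1) ⟨-1, by ring⟩]; simp
  have hidx1 : (-1 - ((k-1:ℕ):ℤ)) = -(k:ℤ) := by rw [hcast]; ring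
  have hidx2 : ((-(2*(k:ℤ)) + 1) + ((k-1:ℕ):ℤ)) = -(k:ℤ) := by rw [hcast]; ring
  have hfk' : f (k-1) = W.mode u (-(k:ℤ)) (W.mode v (-(k:ℤ)) w)
      + W.mode v ((-1 + (-(2*(k:ℤ)) + 1)) - ((k-1:ℕ):ℤ)) (W.mode u ((k-1:ℕ)) w) := by
    rw [hf]
    simp only [hcoef, hneg, hidx1, hidx2, one_smul, neg_smul, one_smul, sub_neg_eq_add]
  have hjunk : W.mode v ((-1 + (-(2*(k:ℤ)) + 1)) - ((k-1:ℕ):ℤ)) (W.mode u ((k-1:ℕ)) w) ∈ S :=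
    mem_Cspace_of_le W (by omega) (by rw [hcast]; push_cast; omega) v _
  have : W.mode u (-(k:ℤ)) (W.mode v (-(k:ℤ)) w) = f (k-1) - W.mode v ((-1 + (-(2*(k:ℤ)) + 1)) - ((k-1:ℕ):ℤ)) (W.mode u ((k-1:ℕ)) w) := by
    rw [hfk']; abel
  rw [this]
  exact Submodule.sub_mem _ hfk hjunk

end Cspaces

section Cofinite

variable {V : Type} [AddCommGroup V] [Module ℂ V] (W : VOA V)

lemma Cgen_mode {k : ℕ} (hk : 2 ≤ k) (a b c : V) :
    W.mode (W.mode a (-(k:ℤ)) b) (-(k:ℤ)) c ∈ Cspace V W.toVertexAlg (k+1) := by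
  rw [iterate_formula]
  apply finsum_mem_submodule
  intro i
  apply zsmul_mem
  apply Submodule.sub_mem
  · rcases Nat.eq_zero_or_pos i with h0 | hpos
    · subst h0
      simpa using key_lemma W hk a b c
    · exact mem_Cspace_of_le W (by omega) (by push_cast; omega) a _
  · exact zsmul_mem (mem_Cspace_of_le W (by omega) (by push_cast; omega) b _) _

lemma Cspace_mode_left {k : ℕ} (hk : 2 ≤ k) {c : V} (hc : c ∈ Cspace V W.toVertexAlg k)
    (b : V) : W.mode c (-(k:ℤ)) b ∈ Cspace V W.toVertexAlg (k+1) := by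
  let L : V →ₗ[ℂ] V :=
    { toFun := fun x => W.mode x (-(k:ℤ)) b
      map_add' := fun x y => by
        show W.mode (x + y) (-(k:ℤ)) b = _
        rw [map_add]; simp only [Pi.add_apply, LinearMap.add_apply]
      map_smul' := fun r x => by
        show W.mode (r • x) (-(k:ℤ)) b = _
        rw [map_smul]; simp only [Pi.smul_apply, LinearMap.smul_apply, RingHom.id_apply] }
  have hle : Cspace V W.toVertexAlg k ≤
      Submodule.comap L (Cspace V W.toVertexAlg (k+1)) := by
    rw [Cspace, Submodule.span_le]
    rintro x ⟨a', b', rfl⟩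
    exact Cgen_mode W hk a' b' b
  exact hle hc

lemma Cspace_mode_right {k : ℕ} (hk : 2 ≤ k) (u : V) {c : V}
    (hc : c ∈ Cspace V W.toVertexAlg k) :
    W.mode u (-(k:ℤ)) c ∈ Cspace V W.toVertexAlg (k+1) := by
  have hle : Cspace V W.toVertexAlg k ≤
      Submodule.comap (W.mode u (-(k:ℤ))) (Cspace V W.toVertexAlg (k+1)) := by
    rw [Cspace, Submodule.span_le]
    rintro x ⟨a', b', rfl⟩
    exact key_lemma W hk u a' b'
  exact hle hc

lemma mode_mem_span_image2 (k : ℤ) (s t : Set V) {x y : V}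
    (hx : x ∈ Submodule.span ℂ s) (hy : y ∈ Submodule.span ℂ t) :
    W.mode x k y ∈ Submodule.span ℂ (Set.image2 (fun a b => W.mode a k b) s t) := by
  induction hx using Submodule.span_induction with
  | mem a ha =>
      induction hy using Submodule.span_induction with
      | mem b hb => exact Submodule.subset_span (Set.mem_image2_of_mem ha hb)
      | zero => rw [map_zero]; exact Submodule.zero_mem _
      | add b c _ _ ihb ihc => rw [map_add]; exact Submodule.add_mem _ ihb ihc
      | smul r b _ ihb => rw [map_smul]; exact Submodule.smul_mem _ _ ihb
  | zero =>
      have h0 : W.mode (0:V) = 0 := map_zero _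
      rw [h0]; simp only [Pi.zero_apply, LinearMap.zero_apply]
      exact Submodule.zero_mem _
  | add a b _ _ iha ihb =>
      rw [map_add]; simp only [Pi.add_apply, LinearMap.add_apply]
      exact Submodule.add_mem _ iha ihb
  | smul r a _ iha =>
      rw [map_smul]; simp only [Pi.smul_apply, LinearMap.smul_apply]
      exact Submodule.smul_mem _ _ iha

lemma cofinite_step {k : ℕ} (hk : 2 ≤ k) (U : Submodule ℂ V)
    (hU : FiniteDimensional ℂ U)
    (hsup : U ⊔ Cspace V W.toVertexAlg k = ⊤) :
    ∃ U' : Submodule ℂ V, FiniteDimensional ℂ U' ∧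
      U' ⊔ Cspace V W.toVertexAlg (k+1) = ⊤ := by
  haveI := hU
  have hfg : U.FG := by
    rw [← Submodule.fg_top]
    exact Module.Finite.fg_top
  obtain ⟨T, hT⟩ := hfg
  set P := Submodule.span ℂ
    (Set.image2 (fun a b => W.mode a (-(k:ℤ)) b) (T : Set V) (T : Set V)) with hP
  have hPfd : FiniteDimensional ℂ P :=
    FiniteDimensional.span_of_finite ℂ (T.finite_toSet.image2 _ T.finite_toSet)
  haveI := hPfd
  refine ⟨U ⊔ P, Submodule.finiteDimensional_sup U P, ?_⟩
  have hCk : Cspace V W.toVertexAlg k ≤ (U ⊔ P) ⊔ Cspace V W.toVertexAlg (k+1) := by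
    rw [Cspace, Submodule.span_le]
    rintro z ⟨a, b, rfl⟩
    have ha : a ∈ U ⊔ Cspace V W.toVertexAlg k := hsup ▸ Submodule.mem_top
    have hb : b ∈ U ⊔ Cspace V W.toVertexAlg k := hsup ▸ Submodule.mem_top
    obtain ⟨ua, hua, ca, hca, hab⟩ := Submodule.mem_sup.mp ha
    obtain ⟨ub, hub, cb, hcb, hbb⟩ := Submodule.mem_sup.mp hb
    have expand : W.mode a (-(k:ℤ)) b
        = W.mode ua (-(k:ℤ)) ub + W.mode ua (-(k:ℤ)) cb + W.mode ca (-(k:ℤ)) b := by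
      rw [← hab, ← hbb, map_add]
      simp only [Pi.add_apply, LinearMap.add_apply, map_add]
      abel
    rw [expand]
    refine Submodule.add_mem _ (Submodule.add_mem _ ?_ ?_) ?_
    · refine Submodule.mem_sup_left (Submodule.mem_sup_right ?_)
      exact mode_mem_span_image2 W (-(k:ℤ)) _ _ (hT ▸ hua) (hT ▸ hub)
    · exact Submodule.mem_sup_right (Cspace_mode_right W hk ua hcb)
    · exact Submodule.mem_sup_right (Cspace_mode_left W hk hca b)
  rw [eq_top_iff, ← hsup]
  exact sup_le (le_trans le_sup_left le_sup_left) hCk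

lemma exists_fd_compl (S : Submodule ℂ V) (h : FiniteDimensional ℂ (V ⧸ S)) :
    ∃ U : Submodule ℂ V, FiniteDimensional ℂ U ∧ U ⊔ S = ⊤ := by
  haveI := h
  have hfg : (⊤ : Submodule ℂ (V ⧸ S)).FG := Module.Finite.fg_top
  obtain ⟨T, hT⟩ := hfg
  have hsur := S.mkQ_surjective
  choose lift hlift using hsur
  set U := Submodule.span ℂ (lift '' (T : Set (V ⧸ S))) with hU
  refine ⟨U, FiniteDimensional.span_of_finite ℂ (T.finite_toSet.image _), ?_⟩
  rw [eq_top_iff]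
  intro x _
  have hx : S.mkQ x ∈ Submodule.span ℂ (T : Set (V ⧸ S)) := by rw [hT]; trivial
  have hmap : Submodule.span ℂ (T : Set (V ⧸ S)) ≤ Submodule.map S.mkQ U := by
    rw [hU, Submodule.map_span]
    apply Submodule.span_mono
    intro y hy
    exact ⟨lift y, Set.mem_image_of_mem _ hy, hlift y⟩
  obtain ⟨u, hu, hux⟩ := hmap hx
  have hxu : x - u ∈ S := by
    have : S.mkQ (x - u) = 0 := by rw [map_sub, hux, sub_self]
    rwa [Submodule.mkQ_apply, Submodule.Quotient.mk_eq_zero] at this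
  exact Submodule.mem_sup.2 ⟨u, hu, x - u, hxu, by abel⟩

lemma fd_quotient_of_sup (S U : Submodule ℂ V) (hU : FiniteDimensional ℂ U)
    (hsup : U ⊔ S = ⊤) : FiniteDimensional ℂ (V ⧸ S) := by
  haveI := hU
  have hmapS : Submodule.map S.mkQ S = ⊥ := by
    rw [eq_bot_iff]
    rintro y ⟨v, hv, rfl⟩
    have hv' : v ∈ S := hv
    simp [Submodule.mkQ_apply, Submodule.Quotient.mk_eq_zero, hv']
  have htop : Submodule.map S.mkQ U = ⊤ := by
    have h1 : Submodule.map S.mkQ ⊤ = ⊤ :=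
      Submodule.map_top S.mkQ ▸ LinearMap.range_eq_top.2 S.mkQ_surjective
    rw [← hsup, Submodule.map_sup, hmapS, sup_bot_eq] at h1
    exact h1
  have hsur : Function.Surjective (S.mkQ.comp U.subtype) := by
    rw [← LinearMap.range_eq_top, LinearMap.range_comp, Submodule.range_subtype, htop]
  exact Module.Finite.of_surjective (S.mkQ.comp U.subtype) hsur

lemma Ck_cofinite (h2 : FiniteDimensional ℂ (V ⧸ Cspace V W.toVertexAlg 2)) (k : ℕ)
    (hk : 2 ≤ k) :
    ∃ U : Submodule ℂ V, FiniteDimensional ℂ U ∧ U ⊔ Cspace V W.toVertexAlg k = ⊤ := by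
  induction k, hk using Nat.le_induction with
  | base => exact exists_fd_compl _ h2
  | succ k hk ih =>
      obtain ⟨U, hUfd, hsup⟩ := ih
      exact cofinite_step W hk U hUfd hsup

end Cofinite

section Grading

open scoped DirectSum

variable {V : Type} [AddCommGroup V] [Module ℂ V] (W : VOA V)

/-- The decomposition equivalence coming from the internal grading. -/
noncomputable def Edec : (⨁ (i : ℤ), ↥(W.grading i)) ≃ₗ[ℂ] V :=
  LinearEquiv.ofBijective (DirectSum.coeLinearMap W.grading) W.internal

/-- Projection onto the weight-`m` component. -/
noncomputable def proj (m : ℤ) : V →ₗ[ℂ] V :=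
  (W.grading m).subtype ∘ₗ
    (DirectSum.component ℂ ℤ (fun i => ↥(W.grading i)) m) ∘ₗ
      (Edec W).symm.toLinearMap

lemma proj_mem (m : ℤ) (v : V) : proj W m v ∈ W.grading m :=
  SetLike.coe_mem _

lemma proj_eq_self {m : ℤ} {v : V} (hv : v ∈ W.grading m) : proj W m v = v := by
  have h := W.internal.ofBijective_coeLinearMap_of_mem hv
  show ((((Edec W).symm v) m : ↥(W.grading m)) : V) = v
  rw [show ((Edec W).symm v) m = ⟨v, hv⟩ from h]

lemma proj_eq_zero {m t : ℤ} {v : V} (hv : v ∈ W.grading m) (hmt : m ≠ t) :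
    proj W t v = 0 := by
  have h := W.internal.ofBijective_coeLinearMap_of_mem_ne hmt hv
  show ((((Edec W).symm v) t : ↥(W.grading t)) : V) = 0
  rw [show ((Edec W).symm v) t = 0 from h]
  rfl

lemma sum_proj (v : V) : ∃ s : Finset ℤ,
    (v = ∑ m ∈ s, proj W m v) ∧ ∀ t : ℤ, t ∉ s → proj W t v = 0 := by
  classical
  set x := (Edec W).symm v with hx
  refine ⟨x.support, ?_, ?_⟩
  · have hsum : (∑ m ∈ x.support, (DirectSum.of (fun i => ↥(W.grading i)) m (x m))) = x :=
      DirectSum.sum_support_of x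
    have h2 : ∀ m, (Edec W) (DirectSum.of (fun i => ↥(W.grading i)) m (x m)) = proj W m v := by
      intro m
      show DirectSum.coeLinearMap W.grading (DirectSum.of (fun i => ↥(W.grading i)) m (x m))
        = proj W m v
      rw [DirectSum.coeLinearMap_of]
      rfl
    calc v = (Edec W) x := ((Edec W).apply_symm_apply v).symm
    _ = (Edec W) (∑ m ∈ x.support, (DirectSum.of (fun i => ↥(W.grading i)) m (x m))) := by
        rw [hsum]
    _ = ∑ m ∈ x.support, (Edec W) (DirectSum.of (fun i => ↥(W.grading i)) m (x m)) := by
        exact map_sum (Edec W).toLinearMap _ _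
    _ = ∑ m ∈ x.support, proj W m v := Finset.sum_congr rfl (fun m _ => h2 m)
  · intro t ht
    show ((x t : ↥(W.grading t)) : V) = 0
    rw [DFinsupp.notMem_support_iff.mp ht]
    rfl

lemma proj_support_finite (v : V) :
    (Function.support (fun m => proj W m v)).Finite := by
  obtain ⟨s, -, hs⟩ := sum_proj W v
  apply Set.Finite.subset s.finite_toSet
  intro m hm
  by_contra hms
  exact hm (hs m hms)

lemma mem_grading_of_eigen {v : V} {r : ℤ} (hv : W.mode W.ω 1 v = (r:ℂ) • v) :
    v ∈ W.grading r := by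
  obtain ⟨s, hs, hvanish⟩ := sum_proj W v
  have hproj : ∀ t : ℤ, t ≠ r → proj W t v = 0 := by
    intro t ht
    by_cases hts : t ∈ s
    · have h1 : W.mode W.ω 1 v = ∑ m ∈ s, ((m:ℂ)) • proj W m v := by
        conv_lhs => rw [hs]
        rw [map_sum]
        exact Finset.sum_congr rfl fun m _ => W.L0_eigen m _ (proj_mem W m v)
      have h2 := congrArg (proj W t) h1
      rw [hv, map_smul, map_sum] at h2
      have h3 : ∀ m ∈ s, proj W t ((m:ℂ) • proj W m v)
          = (if m = t then (m:ℂ) • proj W m v else 0) := by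
        intro m _
        rw [map_smul]
        by_cases hmt : m = t
        · subst hmt
          rw [proj_eq_self W (proj_mem W m v), if_pos rfl]
        · rw [proj_eq_zero W (proj_mem W m v) hmt, smul_zero, if_neg hmt]
      rw [Finset.sum_congr rfl h3, Finset.sum_ite_eq' s t _, if_pos hts] at h2
      have h4 : ((t:ℂ) - (r:ℂ)) • proj W t v = 0 := by
        rw [sub_smul, h2, sub_self]
      have htr : ((t:ℂ) - (r:ℂ)) ≠ 0 := sub_ne_zero.2 (by exact_mod_cast ht)
      exact (smul_eq_zero.mp h4).resolve_left htr
    · exact hvanish t hts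
  rw [hs]
  apply Submodule.sum_mem
  intro m hm
  by_cases hmr : m = r
  · subst hmr; exact proj_mem W m v
  · rw [hproj m hmr]; exact Submodule.zero_mem _

lemma zchoose_one_one : zchoose 1 1 = 1 := by unfold zchoose; simp

lemma mode_mem_grading {r s : ℤ} {u v : V} (hu : u ∈ W.grading r)
    (hv : v ∈ W.grading s) (q : ℤ) :
    W.mode u q v ∈ W.grading (r + s - q - 1) := by
  apply mem_grading_of_eigen
  have hc := comm_formula W.toVertexAlg W.ω u v 1 q
  have hfin : (∑ᶠ i : ℕ, zchoose 1 i • W.mode (W.mode W.ω i u) (1 + q - i) v)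
      = zchoose 1 0 • W.mode (W.mode W.ω 0 u) (1 + q - (0:ℕ)) v
        + zchoose 1 1 • W.mode (W.mode W.ω 1 u) (1 + q - (1:ℕ)) v := by
    rw [finsum_eq_sum_range _ 2 (fun i hi => by rw [zchoose_one i hi, zero_smul])]
    rw [Finset.sum_range_succ, Finset.sum_range_one]
    norm_num
  rw [hfin] at hc
  have e1 : W.mode (W.mode W.ω 0 u) (1 + q - (0:ℕ)) v = (-(1+q)) • W.mode u q v := by
    rw [show ((1:ℤ) + q - (0:ℕ)) = 1 + q by push_cast; ring, W.Lneg1_deriv u (1+q)]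
    simp only [LinearMap.smul_apply]
    norm_num
  have e2 : W.mode (W.mode W.ω 1 u) (1 + q - (1:ℕ)) v = (r:ℂ) • W.mode u q v := by
    rw [show ((1:ℤ) + q - (1:ℕ)) = q by push_cast; ring, W.L0_eigen r u hu, map_smul]
    simp only [Pi.smul_apply, LinearMap.smul_apply]
  have e3 : W.mode u q (W.mode W.ω 1 v) = (s:ℂ) • W.mode u q v := by
    rw [W.L0_eigen s v hv, map_smul]
  rw [e1, e2, e3, zchoose_zero_right, zchoose_one_one, one_smul, one_smul] at hc
  rw [hc, ← Int.cast_smul_eq_zsmul ℂ (-(1+q)) (W.mode u q v)]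
  rw [← add_smul, ← add_smul]
  congr 1
  push_cast
  ring

end Grading

/-- If `V` is `C_2`-cofinite then every `n`-th Zhu algebra
`A_n(V) = V/O_n(V)` is finite-dimensional. -/
theorem stmt18 (W : VOA V)
    (h : FiniteDimensional ℂ (V ⧸ Cspace V W.toVertexAlg 2)) (n : ℕ) :
    FiniteDimensional ℂ (V ⧸ Onspace V W n) := by
  classical
  set K : ℕ := 2*n+2 with hK
  obtain ⟨U, hUfd, hUsup⟩ := Ck_cofinite W h K (by omega)
  haveI := hUfd
  have hfg : U.FG := by rw [← Submodule.fg_top]; exact Module.Finite.fg_top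
  obtain ⟨T, hT⟩ := hfg
  set B : Set V := {x | ∃ t ∈ (T : Set V), ∃ m : ℤ, x = proj W m t} with hB
  set F := Submodule.span ℂ B with hF
  have hBsub : B ⊆ ⋃ t ∈ (T : Set V), insert (0:V)
      ((fun m => proj W m t) '' (Function.support (fun m => proj W m t))) := by
    rintro x ⟨t, ht, m, rfl⟩
    apply Set.mem_biUnion ht
    by_cases h0 : proj W m t = 0
    · rw [h0]; exact Set.mem_insert _ _
    · exact Set.mem_insert_of_mem _ ⟨m, h0, rfl⟩
  have hBfin : (⋃ t ∈ (T : Set V), insert (0:V)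
      ((fun m => proj W m t) '' (Function.support (fun m => proj W m t)))).Finite :=
    T.finite_toSet.biUnion (fun t _ => ((proj_support_finite W t).image _).insert 0)
  have hFfd : FiniteDimensional ℂ F := by
    haveI := FiniteDimensional.span_of_finite ℂ hBfin
    exact Submodule.finiteDimensional_of_le (Submodule.span_mono hBsub)
  have hUF : U ≤ F := by
    rw [← hT, Submodule.span_le]
    intro t ht
    obtain ⟨s, hs, -⟩ := sum_proj W t
    rw [hs]
    exact Submodule.sum_mem _ (fun m _ => Submodule.subset_span ⟨t, ht, m, rfl⟩)
  have hFsup : F ⊔ Cspace V W.toVertexAlg K = ⊤ := by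
    rw [eq_top_iff, ← hUsup]
    exact sup_le (le_trans hUF le_sup_left) le_sup_right
  have hπF : ∀ (m : ℤ), ∀ f ∈ F, proj W m f ∈ F := by
    intro m f hf
    induction hf using Submodule.span_induction with
    | mem x hx =>
        obtain ⟨t, ht, m', rfl⟩ := hx
        by_cases hmm : m' = m
        · subst hmm
          rw [proj_eq_self W (proj_mem W m' t)]
          exact Submodule.subset_span ⟨t, ht, m', rfl⟩
        · rw [proj_eq_zero W (proj_mem W m' t) hmm]; exact Submodule.zero_mem _
    | zero => rw [map_zero]; exact Submodule.zero_mem _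
    | add a b _ _ iha ihb => rw [map_add]; exact Submodule.add_mem _ iha ihb
    | smul c a _ iha => rw [map_smul]; exact Submodule.smul_mem _ _ iha
  set On := Onspace V W n with hOn
  set SUB := F ⊔ On with hSUB
  have main : ∀ N : ℕ, ∀ m : ℤ, m < N → W.grading m ≤ SUB := by
    intro N
    induction N with
    | zero =>
        intro m hm
        rw [W.neg_bot m (by exact_mod_cast hm)]
        exact bot_le
    | succ N ih =>
        intro m hm
        rcases lt_or_ge m (N:ℤ) with hlt | hge
        · exact ih m hlt
        have hmN : m = (N:ℤ) := by push_cast at hm; omega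
        subst hmN
        intro v hv
        obtain ⟨f, hf, c, hcC, hfc⟩ := Submodule.mem_sup.mp
          (hFsup ▸ Submodule.mem_top : v ∈ F ⊔ Cspace V W.toVertexAlg K)
        have hvp : v = proj W (N:ℤ) f + proj W (N:ℤ) c := by
          conv_lhs => rw [← proj_eq_self W hv, ← hfc]
          rw [map_add]
        rw [hvp]
        apply Submodule.add_mem
        · exact Submodule.mem_sup_left (hπF _ f hf)
        · suffices hCp : Cspace V W.toVertexAlg K ≤
              Submodule.comap (proj W (N:ℤ)) SUB by exact hCp hcC
          rw [Cspace, Submodule.span_le]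
          rintro z ⟨a, b, rfl⟩
          show proj W (N:ℤ) (W.mode a (-(K:ℤ)) b) ∈ SUB
          obtain ⟨sa, hsa, -⟩ := sum_proj W a
          obtain ⟨sb, hsb, -⟩ := sum_proj W b
          have hexp : W.mode a (-(K:ℤ)) b
              = ∑ ma ∈ sa, ∑ mb ∈ sb,
                  W.mode (proj W ma a) (-(K:ℤ)) (proj W mb b) := by
            conv_lhs => rw [hsa, hsb]
            rw [map_sum]
            have h1 : ∀ mb : ℤ, (W.mode (∑ m ∈ sa, proj W m a) (-(K:ℤ))) (proj W mb b)
                = ∑ ma ∈ sa, W.mode (proj W ma a) (-(K:ℤ)) (proj W mb b) := by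
              intro mb
              rw [map_sum, Finset.sum_apply, LinearMap.sum_apply]
            rw [Finset.sum_congr rfl (fun mb _ => h1 mb)]
            exact Finset.sum_comm
          rw [hexp, map_sum]
          apply Submodule.sum_mem; intro ma _
          rw [map_sum]
          apply Submodule.sum_mem; intro mb _
          have hxy : W.mode (proj W ma a) (-(K:ℤ)) (proj W mb b)
              ∈ W.grading (ma + mb - (-(K:ℤ)) - 1) :=
            mode_mem_grading W (proj_mem W ma a) (proj_mem W mb b) _
          by_cases hw : ma + mb - (-(K:ℤ)) - 1 = (N:ℤ)
          · rw [proj_eq_self W (hw ▸ hxy)]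
            set x := proj W ma a with hx
            set y := proj W mb b with hy
            have he0 : (∑ᶠ i : ℕ, zchoose (ma + n) i •
                W.mode x ((i:ℤ) - (2 * n + 2)) y) ∈ On :=
              Submodule.subset_span ⟨ma, x, y, proj_mem W ma a, rfl⟩
            obtain ⟨Nt, hNt⟩ := W.trunc x y
            set g : ℕ → V := fun i => zchoose (ma + n) i •
                W.mode x ((i:ℤ) - (2 * n + 2)) y with hg
            have hbound : ∀ i : ℕ, (Nt + 2*n + 2).toNat ≤ i → g i = 0 := by
              intro i hi
              have h2 : (((Nt + 2*n + 2).toNat : ℕ) : ℤ) ≤ (i:ℤ) := by exact_mod_cast hi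
              have h3 : Nt ≤ (i:ℤ) - (2*(n:ℤ)+2) := by
                have h1 := Int.self_le_toNat (Nt + 2*n + 2)
                push_cast at h1 h2 ⊢
                omega
              rw [hg]
              simp only [hNt _ h3, smul_zero]
            have hKcast : ((K:ℕ):ℤ) = 2*(n:ℤ)+2 := by rw [hK]; push_cast; ring
            have hg0 : g 0 ∈ SUB := by
              apply extract_mem SUB g _ 0 hbound ?_ ?_
              · intro i hi
                apply zsmul_mem
                have hm2 : W.mode x ((i:ℤ) - (2 * n + 2)) y
                    ∈ W.grading (ma + mb - ((i:ℤ) - (2*(n:ℤ)+2)) - 1) :=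
                  mode_mem_grading W (proj_mem W ma a) (proj_mem W mb b) _
                have hidx : ma + mb - ((i:ℤ) - (2*(n:ℤ)+2)) - 1 = (N:ℤ) - i := by omega
                rw [hidx] at hm2
                exact ih ((N:ℤ) - i) (by omega) hm2
              · exact Submodule.mem_sup_right he0
            have hg0eq : g 0 = W.mode x (-(K:ℤ)) y := by
              rw [hg]
              simp only [zchoose_zero_right, one_smul]
              rw [show (((0:ℕ):ℤ) - (2*(n:ℤ)+2)) = -(K:ℤ) by rw [hKcast]; push_cast; ring]
            rwa [hg0eq] at hg0
          · rw [proj_eq_zero W hxy hw]; exact Submodule.zero_mem _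
  have htop : F ⊔ On = ⊤ := by
    rw [eq_top_iff, ← W.internal.submodule_iSup_eq_top]
    apply iSup_le
    intro m
    exact main (m.toNat + 1) m (by omega)
  exact fd_quotient_of_sup On F hFfd htop


end VOAPaper
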